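/- Let ν > 1, a₀ > 0, and 2 ≤ n ≤ m. With w(0) = a₀, w(k) = k^{−ν} for k ≥ 1, and S_m(n) = Σ_{k₁+⋯+k_m = n} w(k₁)⋯w(k_m), one has the lower bound S_m(n) ≥ a₀^{m−n}·(a₀+1)^{n−1}·n^{−ν}. -/

import Mathlib

/-!
Splitting off the first variable gives `S_{m+1}(N) = ∑_{i+j=N} w(i) S_m(j)`. Keeping only the
terms `i = 0` and `i = 1` yields `S_{m+1}(N+1) ≥ a₀ S_m(N+1) + S_m(N)`, and by induction on the
number of variables, using that `N ↦ N^{-ν}` is antitone, `S_{k+1}(N) ≥ (a₀+1)^k N^{-ν}` for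
`k < N`. The remaining `m - n` variables are set to zero, each contributing a factor `a₀`.
-/

/-- Weighted power-law sequence: `w 0 = a₀`, `w k = k^(-ν)` for `k ≥ 1`. -/
noncomputable def plw (a₀ ν : ℝ) (k : ℕ) : ℝ :=
  if k = 0 then a₀ else (k : ℝ) ^ (-ν)

/-- `Sm m n`: the `m`-fold convolution of `plw a₀ ν`. -/
noncomputable def Sm (a₀ ν : ℝ) (m n : ℕ) : ℝ :=
  ∑ k ∈ Finset.Nat.antidiagonalTuple m n, ∏ i : Fin m, plw a₀ ν (k i)

open Finset

theorem Finset.Nat.sum_antidiagonalTuple_succ {M : Type*} [AddCommMonoid M] (m N : ℕ)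
    (f : (Fin (m + 1) → ℕ) → M) :
    ∑ k ∈ antidiagonalTuple (m + 1) N, f k =
      ∑ p ∈ antidiagonal N, ∑ t ∈ antidiagonalTuple m p.2, f (Fin.cons p.1 t) := by
  rw [sum_sigma']
  refine sum_bij' (fun k _ => ⟨(k 0, N - k 0), Fin.tail k⟩) (fun x _ => Fin.cons x.1.1 x.2)
    ?_ ?_ ?_ ?_ ?_
  · intro k hk
    rw [mem_antidiagonalTuple, Fin.sum_univ_succ] at hk
    simp only [mem_sigma, HasAntidiagonal.mem_antidiagonal, mem_antidiagonalTuple, Fin.tail]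
    omega
  · rintro ⟨⟨i, j⟩, t⟩ h
    simp only [mem_sigma, HasAntidiagonal.mem_antidiagonal, mem_antidiagonalTuple] at h ⊢
    rw [Fin.sum_cons]
    omega
  · intro k _
    exact Fin.cons_self_tail k
  · rintro ⟨⟨i, j⟩, t⟩ h
    simp only [mem_sigma, HasAntidiagonal.mem_antidiagonal] at h
    simp only [Fin.cons_zero, Fin.tail_cons]
    congr
    omega
  · intro k _
    simp

section Convolution

variable {a₀ ν : ℝ}

@[simp]
theorem plw_zero : plw a₀ ν 0 = a₀ := rfl

theorem plw_of_ne_zero {k : ℕ} (hk : k ≠ 0) : plw a₀ ν k = (k : ℝ) ^ (-ν) :=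
  if_neg hk

@[simp]
theorem plw_one : plw a₀ ν 1 = 1 := by
  simp [plw_of_ne_zero]

theorem plw_nonneg (ha : 0 ≤ a₀) (k : ℕ) : 0 ≤ plw a₀ ν k := by
  unfold plw
  split_ifs
  · exact ha
  · positivity

theorem Sm_nonneg (ha : 0 ≤ a₀) (m N : ℕ) : 0 ≤ Sm a₀ ν m N :=
  sum_nonneg fun _ _ => prod_nonneg fun _ _ => plw_nonneg ha _

theorem Sm_one (N : ℕ) : Sm a₀ ν 1 N = plw a₀ ν N := by
  simp [Sm]

theorem Sm_succ (m N : ℕ) :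
    Sm a₀ ν (m + 1) N = ∑ p ∈ antidiagonal N, plw a₀ ν p.1 * Sm a₀ ν m p.2 := by
  simp only [Sm, Nat.sum_antidiagonalTuple_succ, Fin.prod_univ_succ, Fin.cons_zero,
    Fin.cons_succ, mul_sum]

theorem mul_Sm_le_Sm_succ (ha : 0 ≤ a₀) (m N : ℕ) :
    a₀ * Sm a₀ ν m N ≤ Sm a₀ ν (m + 1) N := by
  rw [Sm_succ]
  exact single_le_sum (f := fun p => plw a₀ ν p.1 * Sm a₀ ν m p.2)
    (fun p _ => mul_nonneg (plw_nonneg ha _) (Sm_nonneg ha _ _))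
    (a := (0, N)) (HasAntidiagonal.mem_antidiagonal.mpr (zero_add N))

theorem mul_Sm_add_Sm_le_Sm_succ (ha : 0 ≤ a₀) (m N : ℕ) :
    a₀ * Sm a₀ ν m (N + 1) + Sm a₀ ν m N ≤ Sm a₀ ν (m + 1) (N + 1) := by
  rw [Sm_succ]
  simpa using add_le_sum (f := fun p => plw a₀ ν p.1 * Sm a₀ ν m p.2)
    (i := (0, N + 1)) (j := (1, N))
    (fun p _ => mul_nonneg (plw_nonneg ha _) (Sm_nonneg ha _ _))
    (HasAntidiagonal.mem_antidiagonal.mpr (zero_add (N + 1)))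
    (HasAntidiagonal.mem_antidiagonal.mpr (add_comm 1 N)) (by simp)

theorem pow_mul_Sm_le_Sm_add (ha : 0 ≤ a₀) (n N d : ℕ) :
    a₀ ^ d * Sm a₀ ν n N ≤ Sm a₀ ν (n + d) N := by
  induction d with
  | zero => simp
  | succ d ih =>
    calc a₀ ^ (d + 1) * Sm a₀ ν n N = a₀ * (a₀ ^ d * Sm a₀ ν n N) := by ring
      _ ≤ a₀ * Sm a₀ ν (n + d) N := mul_le_mul_of_nonneg_left ih ha
      _ ≤ Sm a₀ ν (n + d + 1) N := mul_Sm_le_Sm_succ ha _ _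

theorem add_one_pow_mul_rpow_neg_le_Sm (ha : 0 ≤ a₀) (hν : 0 ≤ ν) {k N : ℕ}
    (hkN : k < N) :
    (a₀ + 1) ^ k * (N : ℝ) ^ (-ν) ≤ Sm a₀ ν (k + 1) N := by
  induction k generalizing N with
  | zero => simp [Sm_one, plw_of_ne_zero hkN.ne']
  | succ k ih =>
    obtain ⟨N, rfl⟩ := Nat.exists_eq_add_one_of_ne_zero (by omega : N ≠ 0)
    have hN : (0 : ℝ) < N := by exact_mod_cast (by omega : 0 < N)
    have hanti : ((N + 1 : ℕ) : ℝ) ^ (-ν) ≤ (N : ℝ) ^ (-ν) :=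
      Real.rpow_le_rpow_of_nonpos hN (by push_cast; linarith) (neg_nonpos.mpr hν)
    calc (a₀ + 1) ^ (k + 1) * ((N + 1 : ℕ) : ℝ) ^ (-ν)
        = a₀ * ((a₀ + 1) ^ k * ((N + 1 : ℕ) : ℝ) ^ (-ν))
            + (a₀ + 1) ^ k * ((N + 1 : ℕ) : ℝ) ^ (-ν) := by ring
      _ ≤ a₀ * Sm a₀ ν (k + 1) (N + 1) + (a₀ + 1) ^ k * (N : ℝ) ^ (-ν) := by
          gcongr
          exact ih (by omega)
      _ ≤ a₀ * Sm a₀ ν (k + 1) (N + 1) + Sm a₀ ν (k + 1) N := by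
          gcongr
          exact ih (by omega)
      _ ≤ Sm a₀ ν (k + 2) (N + 1) := mul_Sm_add_Sm_le_Sm_succ ha _ _

end Convolution

theorem Sm_lower_bound_few_vars (ν a₀ : ℝ) (hν : 1 < ν) (ha : 0 < a₀)
    (m n : ℕ) (hn : 2 ≤ n) (hnm : n ≤ m) :
    a₀ ^ (m - n) * (a₀ + 1) ^ (n - 1) * (n : ℝ) ^ (-ν) ≤ Sm a₀ ν m n := by
  have hdiag := add_one_pow_mul_rpow_neg_le_Sm ha.le (by linarith : 0 ≤ ν)
    (by omega : n - 1 < n)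
  rw [Nat.sub_add_cancel (by omega : 1 ≤ n)] at hdiag
  calc a₀ ^ (m - n) * (a₀ + 1) ^ (n - 1) * (n : ℝ) ^ (-ν)
      = a₀ ^ (m - n) * ((a₀ + 1) ^ (n - 1) * (n : ℝ) ^ (-ν)) := by ring
    _ ≤ a₀ ^ (m - n) * Sm a₀ ν n n := by gcongr
    _ ≤ Sm a₀ ν (n + (m - n)) n := pow_mul_Sm_le_Sm_add ha.le n n (m - n)
    _ = Sm a₀ ν m n := by rw [Nat.add_sub_cancel' hnm]
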